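/- For every ν ≥ 0 and every φ ∈ ℝ, f(φ|ν) ≥ 0. -/

import Mathlib

open Real MeasureTheory Filter

/-- The Gaussian Q-function `Q(x) = ∫_x^∞ (2π)^{-1/2} e^{-t²/2} dt`. -/
noncomputable def gaussQ (x : ℝ) : ℝ :=
  ∫ t in Set.Ioi x, (Real.sqrt (2 * Real.pi))⁻¹ * Real.exp (-t ^ 2 / 2)

/-- The conditional phase density `f(φ|ν)`. -/
noncomputable def phaseDensity (ν φ : ℝ) : ℝ :=
  Real.exp (-ν) / (2 * Real.pi) +
    Real.sqrt ν * Real.cos φ * Real.exp (-ν * Real.sin φ ^ 2) / Real.sqrt Real.pi *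
      (1 - gaussQ (Real.sqrt (2 * ν) * Real.cos φ))

/-- The phase quantization probability function `W_y^{(K)}(ν,θ)`. -/
noncomputable def Wq (K : ℕ) (ν θ : ℝ) (y : ℕ) : ℝ :=
  ∫ φ in (2 * Real.pi / K * y - Real.pi - θ)..(2 * Real.pi / K * (y + 1) - Real.pi - θ),
    phaseDensity ν φ

/-- The phase quantization entropy `w_K(ν,θ)` (base-2 logs; `0 · log₂ 0 = 0` since
`Real.logb 2 0 = 0`). -/
noncomputable def wEnt (K : ℕ) (ν θ : ℝ) : ℝ :=
  -∑ y ∈ Finset.range K, Wq K ν θ y * Real.logb 2 (Wq K ν θ y)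

/-- The capacity `C_φ(s,ν)` of a Gaussian channel with `2s`-sector phase quantization. -/
noncomputable def Cphi (s : ℕ) (ν : ℝ) : ℝ :=
  if 1 ≤ s then Real.logb 2 (2 * s) - wEnt (2 * s) ν (Real.pi / (2 * s)) else 0

/-!
Write `p(t) = e^{-t²/2}/√(2π)` for the standard normal density and put `b = √(2ν) cos φ`.
Since `ν sin²φ = ν - b²/2`, the density factors as
`f(φ|ν) = e^{-ν sin²φ}/√(2π) · (p(b) + b (1 - Q(b)))`.
As `p` is even and `1 - Q(b) = Q(-b)`, the bracket is nonnegative by the Mills-ratio inequality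
`a Q(a) ≤ p(a)` at `a = -b`, which holds because `a ≤ t` on `(a, ∞)` and
`∫_a^∞ t p(t) dt = p(a)`.
-/

open ProbabilityTheory

lemma gaussianPDFReal_zero_one (x : ℝ) :
    gaussianPDFReal 0 1 x = (√(2 * π))⁻¹ * rexp (-x ^ 2 / 2) := by
  simp [gaussianPDFReal]

lemma gaussianPDFReal_zero_one_neg (x : ℝ) :
    gaussianPDFReal 0 1 (-x) = gaussianPDFReal 0 1 x := by
  simp only [gaussianPDFReal_zero_one, neg_sq]

lemma hasDerivAt_gaussianPDFReal_zero_one (x : ℝ) :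
    HasDerivAt (gaussianPDFReal 0 1) (-x * gaussianPDFReal 0 1 x) x := by
  have hexponent : HasDerivAt (fun y : ℝ ↦ -y ^ 2 / 2) (-x) x :=
    (((hasDerivAt_id' x).pow 2).neg.div_const 2).congr_deriv (by ring)
  simp only [funext gaussianPDFReal_zero_one]
  exact (hexponent.exp.const_mul _).congr_deriv (by ring)

lemma tendsto_gaussianPDFReal_zero_one_atTop : Tendsto (gaussianPDFReal 0 1) atTop (nhds 0) := by
  simp only [funext gaussianPDFReal_zero_one]
  rw [← mul_zero (√(2 * π))⁻¹]
  refine (tendsto_exp_atBot.comp ?_).const_mul _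
  exact (tendsto_neg_atTop_atBot.comp (tendsto_pow_atTop two_ne_zero)).atBot_div_const two_pos

lemma integrable_mul_gaussianPDFReal_zero_one : Integrable fun t ↦ t * gaussianPDFReal 0 1 t := by
  convert (integrable_mul_exp_neg_mul_sq one_half_pos).const_mul (√(2 * π))⁻¹ using 2 with t
  rw [gaussianPDFReal_zero_one]
  ring_nf

lemma integral_Ioi_mul_gaussianPDFReal_zero_one (a : ℝ) :
    ∫ t in Set.Ioi a, t * gaussianPDFReal 0 1 t = gaussianPDFReal 0 1 a := by
  have := integral_Ioi_of_hasDerivAt_of_tendsto' (a := a)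
    (fun x _ ↦ (hasDerivAt_gaussianPDFReal_zero_one x).neg.congr_deriv (by ring))
    integrable_mul_gaussianPDFReal_zero_one.integrableOn tendsto_gaussianPDFReal_zero_one_atTop.neg
  simpa using this

lemma gaussQ_eq_setIntegral_gaussianPDFReal (x : ℝ) :
    gaussQ x = ∫ t in Set.Ioi x, gaussianPDFReal 0 1 t := by
  simp only [gaussQ, gaussianPDFReal_zero_one]

lemma gaussQ_neg_add_gaussQ (x : ℝ) : gaussQ (-x) + gaussQ x = 1 := by
  have hint := integrable_gaussianPDFReal 0 1
  rw [gaussQ_eq_setIntegral_gaussianPDFReal, gaussQ_eq_setIntegral_gaussianPDFReal,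
    ← integral_gaussianPDFReal_eq_one 0 one_ne_zero,
    ← intervalIntegral.integral_Iic_add_Ioi hint.integrableOn hint.integrableOn]
  congr 1
  simpa only [gaussianPDFReal_zero_one_neg, neg_neg] using
    integral_comp_neg_Ioi (-x) (gaussianPDFReal 0 1)

lemma one_sub_gaussQ (x : ℝ) : 1 - gaussQ x = gaussQ (-x) := by
  linarith [gaussQ_neg_add_gaussQ x]

lemma mul_gaussQ_le_gaussianPDFReal (a : ℝ) : a * gaussQ a ≤ gaussianPDFReal 0 1 a := by
  rw [gaussQ_eq_setIntegral_gaussianPDFReal, ← integral_const_mul,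
    ← integral_Ioi_mul_gaussianPDFReal_zero_one]
  refine setIntegral_mono_on ((integrable_gaussianPDFReal 0 1).const_mul a).integrableOn
    integrable_mul_gaussianPDFReal_zero_one.integrableOn measurableSet_Ioi fun t ht ↦ ?_
  exact mul_le_mul_of_nonneg_right (le_of_lt ht) (gaussianPDFReal_nonneg 0 1 t)

lemma gaussianPDFReal_add_mul_one_sub_gaussQ_nonneg (b : ℝ) :
    0 ≤ gaussianPDFReal 0 1 b + b * (1 - gaussQ b) := by
  have hmills := mul_gaussQ_le_gaussianPDFReal (-b)
  rw [gaussianPDFReal_zero_one_neg] at hmills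
  rw [one_sub_gaussQ]
  linarith

lemma phaseDensity_eq (ν : ℝ) (hν : 0 ≤ ν) (φ : ℝ) :
    phaseDensity ν φ = rexp (-ν * sin φ ^ 2) / √(2 * π) *
      (gaussianPDFReal 0 1 (√(2 * ν) * cos φ) +
        √(2 * ν) * cos φ * (1 - gaussQ (√(2 * ν) * cos φ))) := by
  have hexp : rexp (-ν) = rexp (-ν * sin φ ^ 2) * rexp (-(√(2 * ν) * cos φ) ^ 2 / 2) := by
    rw [← exp_add, mul_pow, sq_sqrt (by positivity)]
    congr 1
    linear_combination ν * sin_sq_add_cos_sq φ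
  have hπ : √π ^ 2 = π := sq_sqrt pi_pos.le
  rw [phaseDensity, gaussianPDFReal_zero_one, hexp, sqrt_mul zero_le_two, sqrt_mul zero_le_two]
  field_simp
  rw [sq_sqrt zero_le_two]
  linear_combination 2 * rexp (-(2 * √ν ^ 2 * cos φ ^ 2 / 2)) * hπ

/-- For every `ν ≥ 0` and every `φ ∈ ℝ`, `f(φ|ν) ≥ 0`. -/
theorem phaseDensity_nonneg (ν : ℝ) (hν : 0 ≤ ν) (φ : ℝ) :
    0 ≤ phaseDensity ν φ := by
  rw [phaseDensity_eq ν hν φ]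
  exact mul_nonneg (by positivity) (gaussianPDFReal_add_mul_one_sub_gaussQ_nonneg _)
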